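/- arXiv:1601.05360 — 3 statements merged into one kernel-verified Lean document; each statement's English description precedes it below -/
import Mathlib

section
/- Every function in AP admits a polynomial modulus of continuity: if f :⊆ ℝⁿ → ℝᵐ belongs to AP, then there exists a polynomial ℧ : ℝ₊² → ℝ₊ with nonnegative coefficients such that for all x, y ∈ dom f and all μ ≥ 0, if ‖x − y‖_∞ ≤ e^{−℧(‖x‖_∞, μ)} then ‖f(x) − f(y)‖_∞ ≤ e^{−μ}. -/
noncomputable section

/-- Evaluation of a vector of multivariate polynomials at a point. -/
def pEval {d e : ℕ} (p : Fin e → MvPolynomial (Fin d) ℝ) (x : Fin d → ℝ) : Fin e → ℝ :=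
  fun i => MvPolynomial.eval x (p i)

/-- Length of the solution curve of the PIVP `y' = p(y)` on `[0, t]`
(the sup norm of the derivative is integrated). -/
def pLen {d : ℕ} (p : Fin d → MvPolynomial (Fin d) ℝ) (y : ℝ → Fin d → ℝ) (t : ℝ) : ℝ :=
  ∫ s in (0:ℝ)..t, ‖pEval p (y s)‖

/-- `Ω : ℝ₊² → ℝ₊` is a polynomial function. -/
def IsPolyFun2 (Ω : ℝ → ℝ → ℝ) : Prop :=
  (∃ P : MvPolynomial (Fin 2) ℝ, ∀ a b : ℝ, Ω a b = MvPolynomial.eval ![a, b] P) ∧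
  ∀ a b : ℝ, 0 ≤ a → 0 ≤ b → 0 ≤ Ω a b

/-- The class `AP` of polynomial-length computable partial functions `f :⊆ ℝⁿ → ℝᵐ`
(`dom` is the domain of `f`). -/
def AP {n m : ℕ} (dom : Set (Fin n → ℝ)) (f : (Fin n → ℝ) → (Fin m → ℝ)) : Prop :=
  ∃ (d : ℕ) (hd : m ≤ d) (p : Fin d → MvPolynomial (Fin d) ℝ)
    (q : Fin d → MvPolynomial (Fin n) ℝ) (Ω : ℝ → ℝ → ℝ),
    IsPolyFun2 Ω ∧
    ∀ x ∈ dom, ∃ y : ℝ → Fin d → ℝ,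
      (y 0 = fun i => MvPolynomial.eval x (q i)) ∧
      (∀ t : ℝ, 0 ≤ t → HasDerivAt y (pEval p (y t)) t) ∧
      (∀ t : ℝ, 0 ≤ t → ∀ μ : ℝ, 0 ≤ μ → Ω ‖x‖ μ ≤ pLen p y t →
        ‖(fun i : Fin m => y t (Fin.castLE hd i)) - f x‖ ≤ Real.exp (-μ)) ∧
      (∀ t : ℝ, 0 ≤ t → t ≤ pLen p y t)

/-!
Run the PIVPs of `x` and `z` until the curve `y` of `x` has length `L`, a polynomial in
`(‖x‖, μ)` after which `y` approximates `f x` to within `e^{-(μ+2)}`. Up to that time `y`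
stays in the ball of radius `R = ‖q x‖ + L`, and `p` is Lipschitz, with a polynomial constant
`K`, on the ball of radius `R + 1`. By Gronwall's lemma, as long as the curve `w` of `z` stays
within distance `1` of `y`, the two curves are `e^{KL} ‖q x - q z‖`-close; a continuity argument
shows that this distance never reaches `1` when `‖x - z‖ ≤ e^{-℧}` with
`℧ ≈ μ + 2 K L + Lip(q)`. The speeds of `y` and `w` then differ by at most `K e^{-(μ+2+KL)}`,
so `w` has length at least `L - 1`, enough for it to approximate `f z` to within `e^{-(μ+2)}`
as well; the triangle inequality gives `‖f x - f z‖ ≤ 3 e^{-(μ+2)} ≤ e^{-μ}`.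
-/

open Set Metric Real MvPolynomial
open scoped NNReal

namespace MvPolynomial

theorem eval_bind₁ {σ τ R : Type*} [CommSemiring R] (x : τ → R) (g : σ → MvPolynomial τ R)
    (P : MvPolynomial σ R) : eval x (bind₁ g P) = eval (fun i => eval x (g i)) P :=
  eval₂Hom_bind₁ _ _ _ _

variable {σ τ R : Type*} [CommSemiring R] [PartialOrder R] [IsOrderedRing R]

variable (σ R) in
def nonnegCoeffs : Subsemiring (MvPolynomial σ R) where
  carrier := {P | ∀ c, 0 ≤ P.coeff c}
  zero_mem' c := by simp
  one_mem' c := by classical rw [coeff_one]; split_ifs <;> simp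
  add_mem' hP hQ c := by rw [coeff_add]; exact add_nonneg (hP c) (hQ c)
  mul_mem' hP hQ c := by
    classical
    rw [coeff_mul]; exact Finset.sum_nonneg fun x _ => mul_nonneg (hP x.1) (hQ x.2)

theorem mem_nonnegCoeffs {P : MvPolynomial σ R} : P ∈ nonnegCoeffs σ R ↔ ∀ c, 0 ≤ P.coeff c :=
  Iff.rfl

theorem C_mem_nonnegCoeffs {r : R} (hr : 0 ≤ r) : C r ∈ nonnegCoeffs σ R := fun c => by
  classical rw [coeff_C]; split_ifs <;> simp [hr]

theorem X_mem_nonnegCoeffs (i : σ) : X i ∈ nonnegCoeffs σ R := fun c => by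
  classical rw [coeff_X]; split_ifs <;> simp

theorem bind₁_mem_nonnegCoeffs {g : σ → MvPolynomial τ R} (hg : ∀ i, g i ∈ nonnegCoeffs τ R)
    {P : MvPolynomial σ R} (hP : P ∈ nonnegCoeffs σ R) : bind₁ g P ∈ nonnegCoeffs τ R := by
  rw [← support_sum_monomial_coeff P, map_sum]
  refine Subsemiring.sum_mem _ fun c _ => ?_
  rw [bind₁_monomial]
  exact mul_mem (C_mem_nonnegCoeffs (hP c)) (prod_mem fun i _ => pow_mem (hg i) _)

theorem eval_nonneg_of_mem_nonnegCoeffs {P : MvPolynomial σ R} (hP : P ∈ nonnegCoeffs σ R)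
    {x : σ → R} (hx : 0 ≤ x) : 0 ≤ eval x P := by
  rw [eval_eq]
  exact Finset.sum_nonneg fun c _ =>
    mul_nonneg (hP c) (Finset.prod_nonneg fun i _ => pow_nonneg (hx i) _)

theorem eval_le_eval_sum_of_mem_nonnegCoeffs {ι : Type*} [Fintype ι] {P : ι → MvPolynomial σ R}
    (hP : ∀ i, P i ∈ nonnegCoeffs σ R) {x : σ → R} (hx : 0 ≤ x) (i : ι) :
    eval x (P i) ≤ eval x (∑ j, P j) := by
  rw [map_sum]
  exact Finset.single_le_sum (fun j _ => eval_nonneg_of_mem_nonnegCoeffs (hP j) hx)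
    (Finset.mem_univ i)

variable [Fintype σ]

theorem exists_abs_eval_le (P : MvPolynomial σ ℝ) :
    ∃ B ∈ nonnegCoeffs Unit ℝ, ∀ (r : ℝ) (x : σ → ℝ), ‖x‖ ≤ r →
      |eval x P| ≤ eval (fun _ => r) B := by
  induction P using MvPolynomial.induction_on with
  | C a => exact ⟨C |a|, C_mem_nonnegCoeffs (abs_nonneg a), fun r x _ => by simp⟩
  | add P Q hP hQ =>
    obtain ⟨B₁, hB₁, h₁⟩ := hP
    obtain ⟨B₂, hB₂, h₂⟩ := hQ
    refine ⟨B₁ + B₂, add_mem hB₁ hB₂, fun r x hx => ?_⟩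
    rw [map_add, map_add]
    exact (abs_add_le _ _).trans (add_le_add (h₁ r x hx) (h₂ r x hx))
  | mul_X P i hP =>
    obtain ⟨B, hB, h⟩ := hP
    refine ⟨B * X (), mul_mem hB (X_mem_nonnegCoeffs ()), fun r x hx => ?_⟩
    rw [map_mul, map_mul, eval_X, eval_X, abs_mul]
    exact mul_le_mul (h r x hx) ((norm_le_pi_norm x i).trans hx) (abs_nonneg _)
      (eval_nonneg_of_mem_nonnegCoeffs hB fun _ => (norm_nonneg x).trans hx)

theorem exists_abs_eval_sub_eval_le (P : MvPolynomial σ ℝ) :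
    ∃ A ∈ nonnegCoeffs Unit ℝ, ∀ (r : ℝ) (x y : σ → ℝ), ‖x‖ ≤ r → ‖y‖ ≤ r →
      |eval x P - eval y P| ≤ eval (fun _ => r) A * ‖x - y‖ := by
  induction P using MvPolynomial.induction_on with
  | C a => exact ⟨0, zero_mem _, fun r x y _ _ => by simp⟩
  | add P Q hP hQ =>
    obtain ⟨A₁, hA₁, h₁⟩ := hP
    obtain ⟨A₂, hA₂, h₂⟩ := hQ
    refine ⟨A₁ + A₂, add_mem hA₁ hA₂, fun r x y hx hy => ?_⟩
    calc |eval x (P + Q) - eval y (P + Q)|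
        = |(eval x P - eval y P) + (eval x Q - eval y Q)| := by simp only [map_add]; ring_nf
      _ ≤ eval (fun _ => r) A₁ * ‖x - y‖ + eval (fun _ => r) A₂ * ‖x - y‖ :=
        (abs_add_le _ _).trans (add_le_add (h₁ r x y hx hy) (h₂ r x y hx hy))
      _ = eval (fun _ => r) (A₁ + A₂) * ‖x - y‖ := by rw [map_add, add_mul]
  | mul_X P i hP =>
    obtain ⟨A, hA, h⟩ := hP
    obtain ⟨B, hB, hbound⟩ := exists_abs_eval_le P
    refine ⟨B + A * X (), add_mem hB (mul_mem hA (X_mem_nonnegCoeffs ())),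
      fun r x y hx hy => ?_⟩
    have hr : 0 ≤ fun _ : Unit => r := fun _ => (norm_nonneg x).trans hx
    have hxy : |x i - y i| ≤ ‖x - y‖ := norm_le_pi_norm (x - y) i
    calc |eval x (P * X i) - eval y (P * X i)|
        = |eval x P * (x i - y i) + (eval x P - eval y P) * y i| := by
          simp only [map_mul, eval_X]; ring_nf
      _ ≤ |eval x P| * |x i - y i| + |eval x P - eval y P| * |y i| := by
        rw [← abs_mul, ← abs_mul]; exact abs_add_le _ _
      _ ≤ eval (fun _ => r) B * ‖x - y‖ + eval (fun _ => r) A * ‖x - y‖ * r := by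
        gcongr
        · exact eval_nonneg_of_mem_nonnegCoeffs hB hr
        · exact hbound r x hx
        · exact mul_nonneg (eval_nonneg_of_mem_nonnegCoeffs hA hr) (norm_nonneg _)
        · exact h r x y hx hy
        · exact (norm_le_pi_norm y i).trans hy
      _ = eval (fun _ => r) (B + A * X ()) * ‖x - y‖ := by
        simp only [map_add, map_mul, eval_X]; ring

end MvPolynomial

theorem continuous_pEval {d e : ℕ} (p : Fin e → MvPolynomial (Fin d) ℝ) :
    Continuous (pEval p) :=
  continuous_pi fun i => continuous_eval (p i)

theorem exists_norm_pEval_le {d e : ℕ} (p : Fin e → MvPolynomial (Fin d) ℝ) :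
    ∃ B ∈ nonnegCoeffs Unit ℝ, ∀ (r : ℝ) (x : Fin d → ℝ), ‖x‖ ≤ r →
      ‖pEval p x‖ ≤ eval (fun _ => r) B := by
  choose B hB h using fun i => exists_abs_eval_le (p i)
  have hsum : ∑ i, B i ∈ nonnegCoeffs Unit ℝ := sum_mem fun i _ => hB i
  refine ⟨∑ i, B i, hsum, fun r x hx => ?_⟩
  have hr : 0 ≤ fun _ : Unit => r := fun _ => (norm_nonneg x).trans hx
  refine (pi_norm_le_iff_of_nonneg (eval_nonneg_of_mem_nonnegCoeffs hsum hr)).2 fun i => ?_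
  exact (h i r x hx).trans (eval_le_eval_sum_of_mem_nonnegCoeffs hB hr i)

theorem exists_lipschitzOnWith_pEval {d e : ℕ} (p : Fin e → MvPolynomial (Fin d) ℝ) :
    ∃ A ∈ nonnegCoeffs Unit ℝ, ∀ r : ℝ,
      LipschitzOnWith (eval (fun _ => r) A).toNNReal (pEval p) (closedBall 0 r) := by
  choose A hA h using fun i => exists_abs_eval_sub_eval_le (p i)
  have hsum : ∑ i, A i ∈ nonnegCoeffs Unit ℝ := sum_mem fun i _ => hA i
  refine ⟨∑ i, A i, hsum, fun r => LipschitzOnWith.of_dist_le_mul fun x hx y hy => ?_⟩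
  rw [mem_closedBall_zero_iff] at hx hy
  have hr : 0 ≤ fun _ : Unit => r := fun _ => (norm_nonneg x).trans hx
  have hA₀ := eval_nonneg_of_mem_nonnegCoeffs hsum hr
  rw [Real.coe_toNNReal _ hA₀, dist_eq_norm, dist_eq_norm]
  refine (pi_norm_le_iff_of_nonneg (mul_nonneg hA₀ (norm_nonneg _))).2 fun i =>
    (h i r x y hx hy).trans ?_
  gcongr
  exact eval_le_eval_sum_of_mem_nonnegCoeffs hA hr i

theorem norm_vec_two_le {u v r : ℝ} (hu : |u| ≤ r) (hv : |v| ≤ r) : ‖![u, v]‖ ≤ r :=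
  (pi_norm_le_iff_of_nonneg ((abs_nonneg u).trans hu)).2 (Fin.forall_fin_two.2 ⟨hu, hv⟩)

theorem LipschitzOnWith.dist_le_exp_sub {E F : Type*} [PseudoMetricSpace E] [PseudoMetricSpace F]
    {g : E → F} {s : Set E} {A U : ℝ} (hg : LipschitzOnWith A.toNNReal g s) {x z : E} (hx : x ∈ s)
    (hz : z ∈ s) (hxz : dist x z ≤ exp (-U)) : dist (g x) (g z) ≤ exp (A - U) := by
  have hA : (A.toNNReal : ℝ) ≤ exp A := max_le (by linarith [add_one_le_exp A]) (exp_pos A).le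
  calc dist (g x) (g z) ≤ A.toNNReal * dist x z := hg.dist_le_mul x hx z hz
    _ ≤ exp A * exp (-U) := by gcongr
    _ = exp (A - U) := by rw [← exp_add, sub_eq_add_neg]

theorem three_mul_exp_neg_add_two_le (μ : ℝ) : 3 * exp (-(μ + 2)) ≤ exp (-μ) := by
  have h3 : (3 : ℝ) ≤ exp 2 := by linarith [add_one_le_exp (2 : ℝ)]
  calc 3 * exp (-(μ + 2)) ≤ exp 2 * exp (-(μ + 2)) := by gcongr
    _ = exp (-μ) := by rw [← exp_add]; ring_nf

theorem ContinuousOn.forall_le_of_bootstrap {g : ℝ → ℝ} {a b c ε : ℝ}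
    (hg : ContinuousOn g (Icc a b)) (hε : ε < c)
    (h : ∀ t ∈ Icc a b, (∀ u ∈ Ico a t, g u ≤ c) → g t ≤ ε) :
    ∀ t ∈ Icc a b, g t ≤ ε := by
  suffices hlt : ∀ t ∈ Icc a b, g t < c from
    fun t ht => h t ht fun u hu => (hlt u ⟨hu.1, hu.2.le.trans ht.2⟩).le
  by_contra! hbad
  set A := Icc a b ∩ g ⁻¹' Ici c
  have hA : IsClosed A := hg.preimage_isClosed_of_isClosed isClosed_Icc isClosed_Ici
  have hAbdd : BddBelow A := ⟨a, fun u hu => hu.1.1⟩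
  obtain ⟨hmem, hge⟩ := hA.csInf_mem hbad hAbdd
  have hbefore : ∀ u ∈ Ico a (sInf A), g u ≤ c := fun u hu => le_of_lt <| not_le.1 fun hu' =>
    hu.2.not_ge (csInf_le hAbdd ⟨⟨hu.1, hu.2.le.trans hmem.2⟩, hu'⟩)
  exact (hε.trans_le hge).not_ge (h _ hmem hbefore)

theorem dist_le_of_trajectories_of_lipschitzOnWith_closedBall
    {E : Type*} [NormedAddCommGroup E] [NormedSpace ℝ E] {v : E → E} {K : ℝ≥0} {R T : ℝ}
    {y z : ℝ → E} (hv : LipschitzOnWith K v (closedBall 0 (R + 1)))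
    (hyc : ContinuousOn y (Icc 0 T)) (hy : ∀ t ∈ Ico 0 T, HasDerivWithinAt y (v (y t)) (Ici t) t)
    (hzc : ContinuousOn z (Icc 0 T)) (hz : ∀ t ∈ Ico 0 T, HasDerivWithinAt z (v (z t)) (Ici t) t)
    (hyR : ∀ t ∈ Ico 0 T, ‖y t‖ ≤ R) (hyz : dist (y 0) (z 0) * exp (K * T) < 1) :
    ∀ t ∈ Icc 0 T, dist (y t) (z t) ≤ dist (y 0) (z 0) * exp (K * t) := by
  have gronwall : ∀ t ∈ Icc 0 T, (∀ u ∈ Ico 0 t, dist (y u) (z u) ≤ 1) →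
      ∀ s ∈ Icc 0 t, dist (y s) (z s) ≤ dist (y 0) (z 0) * exp (K * s) := by
    intro t ht hclose s hs
    have hsub : Icc 0 t ⊆ Icc 0 T := Icc_subset_Icc_right ht.2
    have hsub' : Ico 0 t ⊆ Ico 0 T := Ico_subset_Ico_right ht.2
    have hyR' : ∀ u ∈ Ico 0 t, ‖y u‖ ≤ R := fun u hu => hyR u (hsub' hu)
    have hzR : ∀ u ∈ Ico 0 t, ‖z u‖ ≤ R + 1 := fun u hu =>
      calc ‖z u‖ ≤ ‖y u‖ + dist (y u) (z u) := by
            rw [dist_eq_norm]; exact norm_le_norm_add_norm_sub _ _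
        _ ≤ R + 1 := add_le_add (hyR' u hu) (hclose u hu)
    simpa using dist_le_of_trajectories_ODE_of_mem (v := fun _ => v)
      (s := fun _ => closedBall 0 (R + 1)) (fun _ _ => hv) (hyc.mono hsub)
      (fun u hu => hy u (hsub' hu))
      (fun u hu => mem_closedBall_zero_iff.2 ((hyR' u hu).trans (by linarith)))
      (hzc.mono hsub) (fun u hu => hz u (hsub' hu))
      (fun u hu => mem_closedBall_zero_iff.2 (hzR u hu)) le_rfl s hs
  have hclose : ∀ t ∈ Icc 0 T, dist (y t) (z t) ≤ dist (y 0) (z 0) * exp (K * T) := by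
    refine (continuous_dist.comp_continuousOn (hyc.prodMk hzc)).forall_le_of_bootstrap hyz
      fun t ht hclose => (gronwall t ht hclose t ⟨ht.1, le_rfl⟩).trans ?_
    gcongr
    exact ht.2
  intro t ht
  exact gronwall T ⟨ht.1.trans ht.2, le_rfl⟩
    (fun u hu => (hclose u (Ico_subset_Icc_self hu)).trans hyz.le) t ht

def IsPIVPSolution {d : ℕ} (p : Fin d → MvPolynomial (Fin d) ℝ) (y : ℝ → Fin d → ℝ) : Prop :=
  ∀ t : ℝ, 0 ≤ t → HasDerivAt y (pEval p (y t)) t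

namespace IsPIVPSolution

open MeasureTheory intervalIntegral

variable {d : ℕ} {p : Fin d → MvPolynomial (Fin d) ℝ} {y z : ℝ → Fin d → ℝ}

theorem continuousOn (hy : IsPIVPSolution p y) : ContinuousOn y (Ici 0) :=
  fun t ht => (hy t ht).continuousAt.continuousWithinAt

theorem continuousOn_velocity (hy : IsPIVPSolution p y) :
    ContinuousOn (fun s => pEval p (y s)) (Ici 0) :=
  (continuous_pEval p).comp_continuousOn hy.continuousOn

theorem intervalIntegrable_speed (hy : IsPIVPSolution p y) {a b : ℝ} (ha : 0 ≤ a) (hb : 0 ≤ b) :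
    IntervalIntegrable (fun s => ‖pEval p (y s)‖) volume a b :=
  (hy.continuousOn_velocity.norm.mono fun _ hs => (le_min ha hb).trans hs.1).intervalIntegrable

theorem norm_sub_le_pLen (hy : IsPIVPSolution p y) {t : ℝ} (ht : 0 ≤ t) :
    ‖y t - y 0‖ ≤ pLen p y t := by
  have hint : IntervalIntegrable (fun s => pEval p (y s)) volume 0 t :=
    (hy.continuousOn_velocity.mono fun _ hs => (le_min le_rfl ht).trans hs.1).intervalIntegrable
  rw [← integral_eq_sub_of_hasDerivAt
    (fun s hs => hy s (by rw [uIcc_of_le ht] at hs; exact hs.1)) hint]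
  exact norm_integral_le_integral_norm ht

theorem pLen_mono (hy : IsPIVPSolution p y) {s t : ℝ} (hs : 0 ≤ s) (hst : s ≤ t) :
    pLen p y s ≤ pLen p y t := by
  unfold pLen
  rw [← integral_add_adjacent_intervals (hy.intervalIntegrable_speed le_rfl hs)
    (hy.intervalIntegrable_speed hs (hs.trans hst))]
  exact le_add_of_nonneg_right (integral_nonneg hst fun _ _ => norm_nonneg _)

theorem continuousOn_pLen (hy : IsPIVPSolution p y) {T : ℝ} (hT : 0 ≤ T) :
    ContinuousOn (pLen p y) (Icc 0 T) := by
  have hint : IntegrableOn (fun s => ‖pEval p (y s)‖) (uIcc 0 T) volume := by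
    rw [uIcc_of_le hT]
    exact (hy.continuousOn_velocity.norm.mono Icc_subset_Ici_self).integrableOn_Icc
  have hcont := continuousOn_primitive_interval hint
  rwa [uIcc_of_le hT] at hcont

theorem exists_pLen_eq (hy : IsPIVPSolution p y) (hlen : ∀ t : ℝ, 0 ≤ t → t ≤ pLen p y t)
    {L : ℝ} (hL : 0 ≤ L) : ∃ T ∈ Icc 0 L, pLen p y T = L :=
  intermediate_value_Icc hL (hy.continuousOn_pLen hL) ⟨integral_same.trans_le hL, hlen L hL⟩

theorem pLen_sub_pLen_le (hy : IsPIVPSolution p y) (hz : IsPIVPSolution p z) {T c : ℝ}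
    (hT : 0 ≤ T) (h : ∀ s ∈ Icc 0 T, ‖pEval p (y s) - pEval p (z s)‖ ≤ c) :
    pLen p y T - pLen p z T ≤ T * c := by
  have hy' := hy.intervalIntegrable_speed le_rfl hT
  have hz' := hz.intervalIntegrable_speed le_rfl hT
  calc pLen p y T - pLen p z T = ∫ s in (0:ℝ)..T, (‖pEval p (y s)‖ - ‖pEval p (z s)‖) :=
        (integral_sub hy' hz').symm
    _ ≤ ∫ _ in (0:ℝ)..T, c := integral_mono_on hT (hy'.sub hz') intervalIntegrable_const
        fun s hs => (norm_sub_norm_le _ _).trans (h s hs)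
    _ = T * c := by simp

theorem exists_dist_le_at_pLen_eq (hy : IsPIVPSolution p y) (hz : IsPIVPSolution p z)
    (hlen : ∀ t : ℝ, 0 ≤ t → t ≤ pLen p y t) {K : ℝ≥0} {R L ε : ℝ}
    (hK : LipschitzOnWith K (pEval p) (closedBall 0 (R + 1))) (hR : ‖y 0‖ + L ≤ R)
    (hL : 0 ≤ L) (hε : ε < 1) (hKLε : K * L * ε ≤ 1)
    (hδ : dist (y 0) (z 0) * exp (K * L) ≤ ε) :
    ∃ T, 0 ≤ T ∧ pLen p y T = L ∧ L - 1 ≤ pLen p z T ∧ dist (y T) (z T) ≤ ε := by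
  obtain ⟨T, ⟨hT, hTL⟩, hyT⟩ := hy.exists_pLen_eq hlen hL
  have hyR : ∀ t ∈ Icc 0 T, ‖y t‖ ≤ R := fun t ht =>
    calc ‖y t‖ ≤ ‖y 0‖ + ‖y t - y 0‖ := norm_le_norm_add_norm_sub' _ _
      _ ≤ ‖y 0‖ + pLen p y T := by
        gcongr; exact (hy.norm_sub_le_pLen ht.1).trans (hy.pLen_mono ht.1 ht.2)
      _ ≤ R := by rwa [hyT]
  have hexp : ∀ t ∈ Icc 0 T, dist (y 0) (z 0) * exp (K * t) ≤ ε := fun t ht =>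
    le_trans (by gcongr; exact ht.2.trans hTL) hδ
  have hsub : Icc 0 T ⊆ Ici 0 := Icc_subset_Ici_self
  have hdist : ∀ t ∈ Icc 0 T, dist (y t) (z t) ≤ ε := fun t ht =>
    (dist_le_of_trajectories_of_lipschitzOnWith_closedBall hK (hy.continuousOn.mono hsub)
      (fun s hs => (hy s hs.1).hasDerivWithinAt) (hz.continuousOn.mono hsub)
      (fun s hs => (hz s hs.1).hasDerivWithinAt) (fun s hs => hyR s (Ico_subset_Icc_self hs))
      ((hexp T ⟨hT, le_rfl⟩).trans_lt hε) t ht).trans (hexp t ht)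
  have hspeed : ∀ s ∈ Icc 0 T, ‖pEval p (y s) - pEval p (z s)‖ ≤ K * ε := fun s hs => by
    have hys : y s ∈ closedBall 0 (R + 1) :=
      mem_closedBall_zero_iff.2 ((hyR s hs).trans (by linarith))
    have hzs : z s ∈ closedBall 0 (R + 1) := by
      rw [mem_closedBall_zero_iff]
      calc ‖z s‖ ≤ ‖y s‖ + dist (y s) (z s) := by
            rw [dist_eq_norm]; exact norm_le_norm_add_norm_sub _ _
        _ ≤ R + 1 := add_le_add (hyR s hs) ((hdist s hs).trans hε.le)
    rw [← dist_eq_norm]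
    exact (hK.dist_le_mul _ hys _ hzs).trans (by gcongr; exact hdist s hs)
  have hKε : 0 ≤ (K : ℝ) * ε := mul_nonneg K.2 (dist_nonneg.trans (hdist 0 ⟨le_rfl, hT⟩))
  refine ⟨T, hT, hyT, ?_, hdist T ⟨hT, le_rfl⟩⟩
  nlinarith [hy.pLen_sub_pLen_le hz hT hspeed, mul_le_mul_of_nonneg_right hTL hKε]

theorem norm_sub_le_exp_neg {m : ℕ} (hd : m ≤ d) {fy fz : Fin m → ℝ}
    (hy : IsPIVPSolution p y) (hz : IsPIVPSolution p z)
    (hlen : ∀ t : ℝ, 0 ≤ t → t ≤ pLen p y t) {K : ℝ≥0} {R L μ : ℝ}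
    (hK : LipschitzOnWith K (pEval p) (closedBall 0 (R + 1))) (hR : ‖y 0‖ + L ≤ R)
    (hL : 0 ≤ L) (hμ : 0 ≤ μ)
    (hfy : ∀ t : ℝ, 0 ≤ t → L ≤ pLen p y t →
      ‖(fun i : Fin m => y t (Fin.castLE hd i)) - fy‖ ≤ exp (-(μ + 2)))
    (hfz : ∀ t : ℝ, 0 ≤ t → L - 1 ≤ pLen p z t →
      ‖(fun i : Fin m => z t (Fin.castLE hd i)) - fz‖ ≤ exp (-(μ + 2)))
    (hδ : dist (y 0) (z 0) ≤ exp (-(μ + 2 + 2 * K * L))) :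
    ‖fy - fz‖ ≤ exp (-μ) := by
  set ε := exp (-(μ + 2 + K * L))
  have hKL : 0 ≤ K * L := mul_nonneg K.2 hL
  have hε : ε ≤ exp (-(μ + 2)) := exp_le_exp.2 (by linarith)
  have hε₁ : ε < 1 := exp_lt_one_iff.2 (by linarith)
  have hKLε : K * L * ε ≤ 1 :=
    calc K * L * ε ≤ K * L * exp (-(K * L)) := by gcongr; exact exp_le_exp.2 (by linarith)
      _ ≤ exp (-1) := mul_exp_neg_le_exp_neg_one _
      _ ≤ 1 := exp_le_one_iff.2 (by norm_num)
  have hδε : dist (y 0) (z 0) * exp (K * L) ≤ ε :=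
    calc dist (y 0) (z 0) * exp (K * L) ≤ exp (-(μ + 2 + 2 * K * L)) * exp (K * L) := by gcongr
      _ = ε := by rw [← exp_add]; congr 1; ring
  obtain ⟨T, hT, hyT, hzT, hyzT⟩ := hy.exists_dist_le_at_pLen_eq hz hlen hK hR hL hε₁ hKLε hδε
  have hproj : ‖(fun i : Fin m => y T (Fin.castLE hd i)) - fun i => z T (Fin.castLE hd i)‖ ≤
      exp (-(μ + 2)) :=
    (pi_norm_comp_le (y T - z T) (Fin.castLE hd)).trans
      ((dist_eq_norm (y T) (z T) ▸ hyzT).trans hε)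
  calc ‖fy - fz‖ = ‖-((fun i => y T (Fin.castLE hd i)) - fy) +
        ((fun i => y T (Fin.castLE hd i)) - fun i => z T (Fin.castLE hd i)) +
        ((fun i => z T (Fin.castLE hd i)) - fz)‖ := by congr 1; abel
    _ ≤ exp (-(μ + 2)) + exp (-(μ + 2)) + exp (-(μ + 2)) := by
        refine norm_add₃_le.trans (add_le_add (add_le_add ?_ hproj) (hfz T hT hzT))
        rw [norm_neg]; exact hfy T hT hyT.ge
    _ ≤ exp (-μ) := by linarith [three_mul_exp_neg_add_two_le μ]

end IsPIVPSolution

/-- `BP`, `Bq` stand for bounds on `|Ω|`, `‖q‖` and `Aq`, `Ap` for Lipschitz constants of `q`, `p`,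
on balls of the given radius. Then `L = BP(a + μ + 3) + 1` exceeds by `1` the length needed for
precision `μ + 2` at any point of norm `≤ a + 1`, and `K = Ap(Bq(a + 1) + L + 1)` is a Lipschitz
constant of `p` on a ball containing both curves up to length `L`. -/
def apModulus (BP Bq Aq Ap : MvPolynomial Unit ℝ) : MvPolynomial (Fin 2) ℝ :=
  let L := bind₁ (fun _ => X 0 + X 1 + 3) BP + 1
  X 1 + 2 + 2 * bind₁ (fun _ => bind₁ (fun _ => X 0 + 1) Bq + L + 1) Ap * L +
    bind₁ (fun _ => X 0 + 1) Aq

theorem apModulus_mem_nonnegCoeffs {BP Bq Aq Ap : MvPolynomial Unit ℝ}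
    (hBP : BP ∈ nonnegCoeffs Unit ℝ) (hBq : Bq ∈ nonnegCoeffs Unit ℝ)
    (hAq : Aq ∈ nonnegCoeffs Unit ℝ) (hAp : Ap ∈ nonnegCoeffs Unit ℝ) :
    apModulus BP Bq Aq Ap ∈ nonnegCoeffs (Fin 2) ℝ := by
  have hX (i : Fin 2) := X_mem_nonnegCoeffs (R := ℝ) i
  have hs : ∀ _ : Unit, X 0 + 1 ∈ nonnegCoeffs (Fin 2) ℝ := fun _ => add_mem (hX 0) (one_mem _)
  have hL := add_mem (bind₁_mem_nonnegCoeffs (fun _ => add_mem (add_mem (hX 0) (hX 1))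
    (ofNat_mem _ 3)) hBP) (one_mem _)
  have hK := bind₁_mem_nonnegCoeffs
    (fun _ => add_mem (add_mem (bind₁_mem_nonnegCoeffs hs hBq) hL) (one_mem _)) hAp
  exact add_mem (add_mem (add_mem (hX 1) (ofNat_mem _ 2))
    (mul_mem (mul_mem (ofNat_mem _ 2) hK) hL)) (bind₁_mem_nonnegCoeffs hs hAq)

theorem eval_apModulus (BP Bq Aq Ap : MvPolynomial Unit ℝ) (a μ : ℝ) :
    let L := eval (fun _ => a + μ + 3) BP + 1
    eval ![a, μ] (apModulus BP Bq Aq Ap) =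
      μ + 2 + 2 * eval (fun _ => eval (fun _ => a + 1) Bq + L + 1) Ap * L +
        eval (fun _ => a + 1) Aq := by
  simp [apModulus, eval_bind₁]

/-- **Every function in `AP` admits a polynomial modulus of continuity**:
there is a two-variable real polynomial `℧` with nonnegative coefficients such that
for all `x, y` in the domain of `f` and all `μ ≥ 0`,
`‖x − y‖_∞ ≤ exp (−℧(‖x‖_∞, μ))` implies `‖f x − f y‖_∞ ≤ exp (−μ)`. -/
theorem ap_poly_modulus_of_continuity {n m : ℕ} (dom : Set (Fin n → ℝ))
    (f : (Fin n → ℝ) → (Fin m → ℝ)) (hf : AP dom f) :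
    ∃ ℧ : MvPolynomial (Fin 2) ℝ,
      (∀ c : Fin 2 →₀ ℕ, 0 ≤ MvPolynomial.coeff c ℧) ∧
      ∀ x ∈ dom, ∀ y ∈ dom, ∀ μ : ℝ, 0 ≤ μ →
        ‖x - y‖ ≤ Real.exp (-(MvPolynomial.eval ![‖x‖, μ] ℧)) →
        ‖f x - f y‖ ≤ Real.exp (-μ) := by
  obtain ⟨d, hd, p, q, Ω, ⟨⟨P, hP⟩, -⟩, H⟩ := hf
  obtain ⟨BP, hBP, hPbound⟩ := exists_abs_eval_le P
  obtain ⟨Bq, hBq, hqbound⟩ := exists_norm_pEval_le q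
  obtain ⟨Aq, hAq, hqlip⟩ := exists_lipschitzOnWith_pEval q
  obtain ⟨Ap, hAp, hplip⟩ := exists_lipschitzOnWith_pEval p
  refine ⟨apModulus BP Bq Aq Ap, mem_nonnegCoeffs.1 (apModulus_mem_nonnegCoeffs hBP hBq hAq hAp),
    ?_⟩
  intro x hx z hz μ hμ hxz
  obtain ⟨Y, hY0, hY, hYf, hYlen⟩ := H x hx
  obtain ⟨Z, hZ0, hZ, hZf, -⟩ := H z hz
  set a := ‖x‖
  set L := eval (fun _ => a + μ + 3) BP + 1
  set R := eval (fun _ => a + 1) Bq + L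
  set K := eval (fun _ => R + 1) Ap
  have hev {B : MvPolynomial Unit ℝ} (hB : B ∈ nonnegCoeffs Unit ℝ) {r : ℝ} (hr : 0 ≤ r) :
      0 ≤ eval (fun _ => r) B := eval_nonneg_of_mem_nonnegCoeffs hB fun _ => hr
  have ha : 0 ≤ a := norm_nonneg x
  have hL : 0 ≤ L := by linarith [hev hBP (r := a + μ + 3) (by positivity)]
  have hK : 0 ≤ K := hev hAp (by linarith [hev hBq (r := a + 1) (by positivity)])
  have h℧ : eval ![a, μ] (apModulus BP Bq Aq Ap) = μ + 2 + 2 * K * L + eval (fun _ => a + 1) Aq :=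
    eval_apModulus ..
  have hza : ‖z‖ ≤ a + 1 := by
    have : ‖x - z‖ ≤ 1 := hxz.trans (exp_le_one_iff.2 (by
      rw [h℧]; nlinarith [mul_nonneg hK hL, hev hAq (r := a + 1) (by positivity)]))
    linarith [norm_le_norm_add_norm_sub x z]
  have hΩ : ∀ u, 0 ≤ u → u ≤ a + 1 → Ω u (μ + 2) ≤ L - 1 := fun u hu hua => by
    rw [hP, add_sub_cancel_right]
    refine (le_abs_self _).trans (hPbound _ _ (norm_vec_two_le ?_ ?_)) <;>
      rw [abs_of_nonneg (by linarith)] <;> linarith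
  refine IsPIVPSolution.norm_sub_le_exp_neg hd hY hZ hYlen (hplip (R + 1)) ?_ hL hμ
    (fun t ht hLt => hYf t ht _ (by linarith) (by linarith [hΩ a ha (by linarith)]))
    (fun t ht hLt => hZf t ht _ (by linarith) ((hΩ _ (norm_nonneg z) hza).trans hLt)) ?_
  · rw [hY0]
    exact add_le_add_left (hqbound (a + 1) x (by linarith)) L
  · rw [Real.coe_toNNReal _ hK, hY0, hZ0]
    refine ((hqlip (a + 1)).dist_le_exp_sub (mem_closedBall_zero_iff.2 (by linarith))
      (mem_closedBall_zero_iff.2 hza) ((dist_eq_norm x z).trans_le hxz)).trans_eq ?_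
    rw [h℧]; ring_nf
end
end

section
/- The class GPVAL is closed under pointwise addition and subtraction: if I ⊆ ℝ^d is open and connected and f : I → ℝ^e and g : I → ℝ^e both belong to GPVAL, then f + g : I → ℝ^e and f − g : I → ℝ^e belong to GPVAL. -/
/-!
Let `y_f` and `y_g` be polynomially bounded solutions of polynomial ODEs `Dy = p(y)` whose first
coordinates are `f` and `g`; their concatenation `(y_f, y_g)` is again such a solution. Any linear
readout `L y` of such a solution can be prepended to it as new coordinates, since `D(L y) = L p(y)`
again has polynomial entries in `y`, and `‖L y‖ ≤ ‖L‖ ‖y‖` keeps the bound polynomial. Reading off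
`f + c g` from `(y_f, y_g)` this way gives closure under `f + c g`, in particular for `c = ±1`.
-/

noncomputable section

/-- The continuous linear map `ℝ^d → ℝ^n` associated to an `n × d` real matrix. -/
def matLin {n d : ℕ} (M : Matrix (Fin n) (Fin d) ℝ) : (Fin d → ℝ) →L[ℝ] (Fin n → ℝ) :=
  LinearMap.toContinuousLinearMap (Matrix.toLin' M)

/-- The class `GPVAL` of polynomially bounded generable functions on `I`. -/
def GPVAL {d e : ℕ} (I : Set (Fin d → ℝ)) (f : (Fin d → ℝ) → (Fin e → ℝ)) : Prop :=
  ∃ (sp : Polynomial ℝ) (n : ℕ) (hn : e ≤ n)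
    (p : Matrix (Fin n) (Fin d) (MvPolynomial (Fin n) ℝ))
    (x₀ : Fin d → ℝ) (y₀ : Fin n → ℝ) (y : (Fin d → ℝ) → (Fin n → ℝ)),
    (∀ a : ℝ, 0 ≤ a → 0 ≤ sp.eval a) ∧
    x₀ ∈ I ∧ y x₀ = y₀ ∧
    (∀ x ∈ I, HasFDerivAt y (matLin (fun i j => MvPolynomial.eval (y x) (p i j))) x) ∧
    (∀ x ∈ I, ∀ i : Fin e, f x i = y x (Fin.castLE hn i)) ∧
    (∀ x ∈ I, ‖y x‖ ≤ sp.eval ‖x‖)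

open Matrix MvPolynomial

theorem matLin_apply {n d : ℕ} (M : Matrix (Fin n) (Fin d) ℝ) (v : Fin d → ℝ) :
    matLin M v = M *ᵥ v :=
  rfl

theorem matLin_mul {m n k : ℕ} (A : Matrix (Fin m) (Fin n) ℝ) (B : Matrix (Fin n) (Fin k) ℝ) :
    matLin (A * B) = (matLin A).comp (matLin B) := by
  ext1 v
  simp only [matLin_apply, ContinuousLinearMap.comp_apply, mulVec_mulVec]

section FinAppend

variable {α : Type*} {m n d : ℕ}

def Matrix.finAppendRows (A : Matrix (Fin m) (Fin d) α) (B : Matrix (Fin n) (Fin d) α) :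
    Matrix (Fin (m + n)) (Fin d) α :=
  Matrix.of (Fin.append A B)

@[simp]
theorem Matrix.finAppendRows_castAdd (A : Matrix (Fin m) (Fin d) α)
    (B : Matrix (Fin n) (Fin d) α) (a : Fin m) : finAppendRows A B (Fin.castAdd n a) = A a :=
  Fin.append_left _ _ a

@[simp]
theorem Matrix.finAppendRows_natAdd (A : Matrix (Fin m) (Fin d) α)
    (B : Matrix (Fin n) (Fin d) α) (b : Fin n) : finAppendRows A B (Fin.natAdd m b) = B b :=
  Fin.append_right _ _ b

theorem Matrix.finAppendRows_mulVec [NonUnitalNonAssocSemiring α]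
    (A : Matrix (Fin m) (Fin d) α) (B : Matrix (Fin n) (Fin d) α) (v : Fin d → α) :
    finAppendRows A B *ᵥ v = Fin.append (A *ᵥ v) (B *ᵥ v) := by
  ext i
  refine Fin.addCases (fun a => ?_) (fun b => ?_) i <;> simp [mulVec]

theorem Matrix.finAppendRows_map {β : Type*} (A : Matrix (Fin m) (Fin d) α)
    (B : Matrix (Fin n) (Fin d) α) (f : α → β) :
    (finAppendRows A B).map f = finAppendRows (A.map f) (B.map f) := by
  ext i j
  refine Fin.addCases (fun a => ?_) (fun b => ?_) i <;> simp

theorem Matrix.finAppend_dotProduct_finAppend [NonUnitalNonAssocSemiring α]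
    (a u : Fin m → α) (b v : Fin n → α) :
    Fin.append a b ⬝ᵥ Fin.append u v = a ⬝ᵥ u + b ⬝ᵥ v := by
  simp [dotProduct, Fin.sum_univ_add]

theorem norm_finAppend_le {F : Type*} [SeminormedAddGroup F] (u : Fin m → F) (v : Fin n → F) :
    ‖Fin.append u v‖ ≤ max ‖u‖ ‖v‖ := by
  refine (pi_norm_le_iff_of_nonneg (by positivity)).2 fun i => ?_
  refine Fin.addCases (fun a => ?_) (fun b => ?_) i
  · simpa using (norm_le_pi_norm u a).trans (le_max_left _ _)
  · simpa using (norm_le_pi_norm v b).trans (le_max_right _ _)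

theorem HasFDerivAt.finAppend_matLin {u : (Fin d → ℝ) → Fin m → ℝ}
    {v : (Fin d → ℝ) → Fin n → ℝ} {A : Matrix (Fin m) (Fin d) ℝ} {B : Matrix (Fin n) (Fin d) ℝ}
    {x : Fin d → ℝ} (hu : HasFDerivAt u (matLin A) x) (hv : HasFDerivAt v (matLin B) x) :
    HasFDerivAt (fun x => Fin.append (u x) (v x)) (matLin (finAppendRows A B)) x := by
  refine hasFDerivAt_pi'.2 fun i => Fin.addCases (fun a => ?_) (fun b => ?_) i
  · convert hasFDerivAt_pi'.1 hu a using 1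
    · simp
    · ext w; simp [matLin_apply, finAppendRows_mulVec]
  · convert hasFDerivAt_pi'.1 hv b using 1
    · simp
    · ext w; simp [matLin_apply, finAppendRows_mulVec]

end FinAppend

theorem Matrix.map_rename_map_eval {ι κ σ τ R : Type*} [CommSemiring R]
    (p : Matrix ι κ (MvPolynomial σ R)) (k : σ → τ) (w : τ → R) :
    (p.map (rename k)).map (eval w) = p.map (eval (w ∘ k)) := by
  ext
  simp [eval_rename]

section PolyODE

variable {d m n e : ℕ} {I : Set (Fin d → ℝ)}

def SolvesPolyODE (I : Set (Fin d → ℝ)) (p : Matrix (Fin n) (Fin d) (MvPolynomial (Fin n) ℝ))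
    (y : (Fin d → ℝ) → Fin n → ℝ) : Prop :=
  ∀ x ∈ I, HasFDerivAt y (matLin (p.map (eval (y x)))) x

theorem SolvesPolyODE.finAppend {p₁ : Matrix (Fin m) (Fin d) (MvPolynomial (Fin m) ℝ)}
    {p₂ : Matrix (Fin n) (Fin d) (MvPolynomial (Fin n) ℝ)} {y₁ : (Fin d → ℝ) → Fin m → ℝ}
    {y₂ : (Fin d → ℝ) → Fin n → ℝ} (h₁ : SolvesPolyODE I p₁ y₁) (h₂ : SolvesPolyODE I p₂ y₂) :
    ∃ p, SolvesPolyODE I p (fun x => Fin.append (y₁ x) (y₂ x)) := by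
  refine ⟨finAppendRows (p₁.map (rename (Fin.castAdd n))) (p₂.map (rename (Fin.natAdd m))),
    fun x hx => ?_⟩
  have h_left : Fin.append (y₁ x) (y₂ x) ∘ Fin.castAdd n = y₁ x := by ext; simp
  have h_right : Fin.append (y₁ x) (y₂ x) ∘ Fin.natAdd m = y₂ x := by ext; simp
  rw [finAppendRows_map, map_rename_map_eval, map_rename_map_eval, h_left, h_right]
  exact (h₁ x hx).finAppend_matLin (h₂ x hx)

theorem SolvesPolyODE.finAppend_mulVec {p : Matrix (Fin n) (Fin d) (MvPolynomial (Fin n) ℝ)}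
    {y : (Fin d → ℝ) → Fin n → ℝ} (h : SolvesPolyODE I p y) (L : Matrix (Fin e) (Fin n) ℝ) :
    ∃ q, SolvesPolyODE I q (fun x => Fin.append (L *ᵥ y x) (y x)) := by
  let p' := p.map (rename (Fin.natAdd e))
  -- with `C` left untyped, `*` elaborates through the `CStarMatrix` instance
  let C' : ℝ →+* MvPolynomial (Fin (e + n)) ℝ := C
  refine ⟨finAppendRows (L.map C' * p') p', fun x hx => ?_⟩
  have h_right : Fin.append (L *ᵥ y x) (y x) ∘ Fin.natAdd e = y x := by ext; simp
  have h_eval : p'.map (eval (Fin.append (L *ᵥ y x) (y x))) = p.map (eval (y x)) := by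
    rw [map_rename_map_eval, h_right]
  have h_mul :
      (L.map C' * p').map (eval (Fin.append (L *ᵥ y x) (y x))) = L * p.map (eval (y x)) := by
    rw [Matrix.map_mul, h_eval, Matrix.map_map]
    simp only [C', Function.comp_def, eval_C, Matrix.map_id']
  have h_lin : HasFDerivAt (fun x => L *ᵥ y x) (matLin (L * p.map (eval (y x)))) x := by
    rw [matLin_mul]
    exact (matLin L).hasFDerivAt.comp x (h x hx)
  rw [finAppendRows_map, h_mul, h_eval]
  exact h_lin.finAppend_matLin (h x hx)

end PolyODE

section PolyBounded

variable {E : Type*} [Norm E] {I : Set E}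

def PolyBounded {F : Type*} [Norm F] (I : Set E) (y : E → F) : Prop :=
  ∃ sp : Polynomial ℝ, (∀ a : ℝ, 0 ≤ a → 0 ≤ sp.eval a) ∧ ∀ x ∈ I, ‖y x‖ ≤ sp.eval ‖x‖

theorem PolyBounded.of_norm_le_add {F G H : Type*} [Norm F] [Norm G] [Norm H] {u : E → F}
    {v : E → G} {z : E → H} (hu : PolyBounded I u) (hv : PolyBounded I v)
    (h : ∀ x ∈ I, ‖z x‖ ≤ ‖u x‖ + ‖v x‖) : PolyBounded I z := by
  obtain ⟨su, hsu, hu⟩ := hu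
  obtain ⟨sv, hsv, hv⟩ := hv
  refine ⟨su + sv, fun a ha => ?_, fun x hx => ?_⟩
  · simpa using add_nonneg (hsu a ha) (hsv a ha)
  · simpa using (h x hx).trans (add_le_add (hu x hx) (hv x hx))

theorem PolyBounded.clm_comp {F G : Type*} [SeminormedAddCommGroup F] [NormedSpace ℝ F]
    [SeminormedAddCommGroup G] [NormedSpace ℝ G] {y : E → F} (hy : PolyBounded I y)
    (A : F →L[ℝ] G) : PolyBounded I (fun x => A (y x)) := by
  obtain ⟨sp, hsp, hy⟩ := hy
  refine ⟨Polynomial.C ‖A‖ * sp, fun a ha => ?_, fun x hx => ?_⟩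
  · simpa using mul_nonneg (norm_nonneg A) (hsp a ha)
  · simpa using (A.le_opNorm (y x)).trans (mul_le_mul_of_nonneg_left (hy x hx) (norm_nonneg A))

theorem PolyBounded.finAppend {F : Type*} [SeminormedAddGroup F] {m n : ℕ} {u : E → Fin m → F}
    {v : E → Fin n → F} (hu : PolyBounded I u) (hv : PolyBounded I v) :
    PolyBounded I (fun x => Fin.append (u x) (v x)) :=
  hu.of_norm_le_add hv fun _ _ =>
    (norm_finAppend_le _ _).trans (max_le_add_of_nonneg (norm_nonneg _) (norm_nonneg _))

end PolyBounded

section GPVAL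

variable {d e : ℕ} {I : Set (Fin d → ℝ)}

theorem gpval_iff {f : (Fin d → ℝ) → Fin e → ℝ} :
    GPVAL I f ↔ I.Nonempty ∧ ∃ (n : ℕ) (hn : e ≤ n)
      (p : Matrix (Fin n) (Fin d) (MvPolynomial (Fin n) ℝ)) (y : (Fin d → ℝ) → Fin n → ℝ),
      SolvesPolyODE I p y ∧ PolyBounded I y ∧
        ∀ x ∈ I, ∀ i, f x i = y x (Fin.castLE hn i) := by
  constructor
  · rintro ⟨sp, n, hn, p, x₀, -, y, hsp, hx₀, -, hy, hfy, hb⟩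
    exact ⟨⟨x₀, hx₀⟩, n, hn, p, y, hy, ⟨sp, hsp, hb⟩, hfy⟩
  · rintro ⟨⟨x₀, hx₀⟩, n, hn, p, y, hy, ⟨sp, hsp, hb⟩, hfy⟩
    exact ⟨sp, n, hn, p, x₀, y x₀, y, hsp, hx₀, rfl, hy, hfy, hb⟩

theorem GPVAL.congr {f g : (Fin d → ℝ) → Fin e → ℝ} (hf : GPVAL I f) (hfg : Set.EqOn f g I) :
    GPVAL I g := by
  obtain ⟨hI, n, hn, p, y, hy, hb, hfy⟩ := gpval_iff.1 hf
  exact gpval_iff.2 ⟨hI, n, hn, p, y, hy, hb, fun x hx i => hfg hx ▸ hfy x hx i⟩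

theorem gpval_mulVec {n : ℕ} {p : Matrix (Fin n) (Fin d) (MvPolynomial (Fin n) ℝ)}
    {y : (Fin d → ℝ) → Fin n → ℝ} (hI : I.Nonempty) (hy : SolvesPolyODE I p y)
    (hb : PolyBounded I y) (L : Matrix (Fin e) (Fin n) ℝ) : GPVAL I (fun x => L *ᵥ y x) := by
  obtain ⟨q, hq⟩ := hy.finAppend_mulVec L
  exact gpval_iff.2 ⟨hI, e + n, Nat.le_add_right e n, q, _, hq,
    (hb.clm_comp (matLin L)).finAppend hb, fun x _ i => (Fin.append_left _ _ i).symm⟩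

theorem GPVAL.add_smul {f g : (Fin d → ℝ) → Fin e → ℝ} (hf : GPVAL I f) (hg : GPVAL I g)
    (c : ℝ) : GPVAL I (f + c • g) := by
  obtain ⟨hI, m, hm, pf, yf, hyf, hbf, hfy⟩ := gpval_iff.1 hf
  obtain ⟨-, n, hn, pg, yg, hyg, hbg, hgy⟩ := gpval_iff.1 hg
  obtain ⟨p, hy⟩ := hyf.finAppend hyg
  let L : Matrix (Fin e) (Fin (m + n)) ℝ := fun i =>
    Fin.append (Pi.single (Fin.castLE hm i) 1) (Pi.single (Fin.castLE hn i) c)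
  refine (gpval_mulVec hI hy (hbf.finAppend hbg) L).congr fun x hx => ?_
  ext i
  simp [L, mulVec, finAppend_dotProduct_finAppend, hfy x hx, hgy x hx]

end GPVAL

theorem gpval_add_sub_general {d e : ℕ} (I : Set (Fin d → ℝ))
    (f g : (Fin d → ℝ) → (Fin e → ℝ)) (hf : GPVAL I f) (hg : GPVAL I g) :
    GPVAL I (f + g) ∧ GPVAL I (f - g) :=
  ⟨by simpa using hf.add_smul hg 1, by simpa [sub_eq_add_neg] using hf.add_smul hg (-1)⟩

/-- **`GPVAL` is closed under pointwise addition and subtraction.** -/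
theorem gpval_add_sub {d e : ℕ} (I : Set (Fin d → ℝ))
    (hIopen : IsOpen I) (hIconn : IsConnected I)
    (f g : (Fin d → ℝ) → (Fin e → ℝ)) (hf : GPVAL I f) (hg : GPVAL I g) :
    GPVAL I (f + g) ∧ GPVAL I (f - g) :=
  gpval_add_sub_general I f g hf hg
end
end

section
/- Tower-of-exponentials growth of a PIVP: fix n ≥ 1 and consider the PIVP on ℝⁿ given by y₁' = y₁, y_{k+1}' = y_k · y_{k+1} for 1 ≤ k ≤ n−1, with initial condition y_k(0) = 1 for all k. Its unique solution is defined for all t ≥ 0 and satisfies y₁(t) = e^t and y_{k+1}(t) = exp(∫₀ᵗ y_k(s) ds) for all t ≥ 0. Moreover, defining the iterated exponentials E₁(u) = e^u and E_{k+1}(u) = e^{E_k(u)}, the solution satisfies y_n(t) ≥ E_n(t − n + 1) for all t ≥ n − 1; in particular y_n grows at least as fast as a tower of n exponentials. -/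
noncomputable section

/-- Right-hand side of the PIVP `y₁' = y₁`, `y_{k+1}' = y_k · y_{k+1}`
(indices `0, …, n−1` in Lean correspond to `1, …, n` in the paper). -/
def towerRHS (n : ℕ) (v : Fin n → ℝ) : Fin n → ℝ := fun i =>
  if (i : ℕ) = 0 then v i
  else v ⟨(i : ℕ) - 1, lt_of_le_of_lt (Nat.sub_le _ _) i.isLt⟩ * v i

/-- Iterated exponentials: `E₀(u) = u`, `E_{k+1}(u) = exp (E_k(u))`. -/
def iterExp : ℕ → ℝ → ℝ
  | 0, u => u
  | k + 1, u => Real.exp (iterExp k u)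

namespace PIVPTower

/-- The explicit solution components. -/
noncomputable def Y : ℕ → ℝ → ℝ
  | 0 => Real.exp
  | k + 1 => fun t => Real.exp (∫ s in (0:ℝ)..t, Y k s)

lemma Y_basic : ∀ k : ℕ, Continuous (Y k) ∧
    ∀ t : ℝ, HasDerivAt (fun u => ∫ s in (0:ℝ)..u, Y k s) (Y k t) t := by
  intro k
  induction k with
  | zero =>
    refine ⟨Real.continuous_exp, fun t => ?_⟩
    exact intervalIntegral.integral_hasDerivAt_right
      (Real.continuous_exp.intervalIntegrable _ _)
      (Real.continuous_exp.stronglyMeasurableAtFilter _ _)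
      Real.continuous_exp.continuousAt
  | succ k ih =>
    obtain ⟨hc, hd⟩ := ih
    have hdiff : Differentiable ℝ (fun u => ∫ s in (0:ℝ)..u, Y k s) :=
      fun t => (hd t).differentiableAt
    have hc' : Continuous (Y (k + 1)) := Real.continuous_exp.comp hdiff.continuous
    exact ⟨hc', fun t => intervalIntegral.integral_hasDerivAt_right
      (hc'.intervalIntegrable _ _) (hc'.stronglyMeasurableAtFilter _ _) hc'.continuousAt⟩

lemma Y_pos (k : ℕ) (t : ℝ) : 0 < Y k t := by
  cases k with
  | zero => exact Real.exp_pos t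
  | succ k => exact Real.exp_pos _

lemma Y_hasDerivAt (k : ℕ) (t : ℝ) :
    HasDerivAt (Y (k + 1)) (Y k t * Y (k + 1) t) t := by
  have h := ((Y_basic k).2 t).exp
  simpa [Y, mul_comm] using h

lemma Y_mono (k : ℕ) : Monotone (Y k) := by
  cases k with
  | zero => exact Real.exp_monotone
  | succ k =>
    have hd := (Y_basic k).2
    have hmono : Monotone (fun u => ∫ s in (0:ℝ)..u, Y k s) :=
      monotone_of_hasDerivAt_nonneg hd (fun t => (Y_pos k t).le)
    intro a b h
    exact Real.exp_le_exp.mpr (hmono h)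

lemma Y_zero (k : ℕ) : Y k 0 = 1 := by
  cases k with
  | zero => exact Real.exp_zero
  | succ k => simp [Y]

lemma Y_growth : ∀ k : ℕ, ∀ t : ℝ, (k : ℝ) ≤ t → iterExp (k + 1) (t - k) ≤ Y k t := by
  intro k
  induction k with
  | zero => intro t ht; simp [iterExp, Y]
  | succ k ih =>
    intro t ht
    push_cast at ht ⊢
    have h1 : (k : ℝ) ≤ t - 1 := by linarith
    have hYk := ih (t - 1) h1
    have hint : ∀ a b : ℝ, IntervalIntegrable (Y k) MeasureTheory.volume a b :=
      fun a b => ((Y_basic k).1).intervalIntegrable a b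
    have hsplit : (∫ s in (0:ℝ)..t, Y k s)
        = (∫ s in (0:ℝ)..(t - 1), Y k s) + ∫ s in (t - 1)..t, Y k s :=
      (intervalIntegral.integral_add_adjacent_intervals (hint _ _) (hint _ _)).symm
    have h2 : (0:ℝ) ≤ ∫ s in (0:ℝ)..(t - 1), Y k s :=
      intervalIntegral.integral_nonneg (by linarith) (fun s _ => (Y_pos k s).le)
    have h3 : Y k (t - 1) ≤ ∫ s in (t - 1)..t, Y k s := by
      have := intervalIntegral.integral_mono_on (f := fun _ => Y k (t - 1)) (g := Y k)
        (by linarith : t - 1 ≤ t) (intervalIntegrable_const) (hint _ _)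
        (fun s hs => Y_mono k hs.1)
      simpa using this
    have hI : iterExp (k + 1) (t - 1 - k) ≤ ∫ s in (0:ℝ)..t, Y k s := by
      rw [hsplit]; linarith
    have harg : t - ((k : ℝ) + 1) = t - 1 - k := by ring
    calc iterExp (k + 1 + 1) (t - ((k:ℝ) + 1))
        = Real.exp (iterExp (k + 1) (t - 1 - k)) := by rw [harg]; rfl
      _ ≤ Real.exp (∫ s in (0:ℝ)..t, Y k s) := Real.exp_le_exp.mpr hI
      _ = Y (k + 1) t := rfl

lemma uniqueness {n : ℕ} (z : ℝ → Fin n → ℝ)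
    (h0 : ∀ i, z 0 i = 1)
    (hd : ∀ t : ℝ, 0 ≤ t → HasDerivAt z (towerRHS n (z t)) t) :
    ∀ k : ℕ, ∀ hk : k < n, ∀ t : ℝ, 0 ≤ t → z t ⟨k, hk⟩ = Y k t := by
  have hcomp : ∀ (i : Fin n) (t : ℝ), 0 ≤ t →
      HasDerivAt (fun u => z u i) (towerRHS n (z t) i) t :=
    fun i t ht => hasDerivAt_pi.mp (hd t ht) i
  have hzc : ∀ (i : Fin n) (s : ℝ), 0 ≤ s → ContinuousAt (fun u => z u i) s :=
    fun i s hs => (hcomp i s hs).continuousAt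
  intro k
  induction k with
  | zero =>
    intro hk t ht
    set i : Fin n := ⟨0, hk⟩
    set g : ℝ → ℝ := fun u => z u i * Real.exp (-u) with hg
    have key : g t = g 0 := by
      apply constant_of_has_deriv_right_zero (a := 0) (b := t)
        (f := g) (fun s hs => ((hzc i s hs.1).mul
          (Real.continuous_exp.continuousAt.comp (continuousAt_neg))).continuousWithinAt)
        ?_ t (Set.right_mem_Icc.mpr ht)
      intro x hx
      have hexp : HasDerivAt (fun u : ℝ => Real.exp (-u)) (Real.exp (-x) * (-1)) x :=
        (Real.hasDerivAt_exp (-x)).comp x ((hasDerivAt_neg x))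
      have hz := hcomp i x hx.1
      have htr : towerRHS n (z x) i = z x i := by simp [towerRHS, i]
      rw [htr] at hz
      have hprod := hz.mul hexp
      have : z x i * Real.exp (-x) + z x i * (Real.exp (-x) * (-1)) = 0 := by ring
      rw [this] at hprod
      exact hprod.hasDerivWithinAt
    have hg0 : g 0 = 1 := by simp [hg, h0 i]
    have : z t i * Real.exp (-t) = 1 := by rw [← hg0]; exact key
    have hY : Y 0 t = Real.exp t := rfl
    rw [hY]
    have := congrArg (· * Real.exp t) this
    simpa [Real.exp_neg, mul_assoc, Real.exp_ne_zero] using this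
  | succ k ih =>
    intro hk t ht
    have hk' : k < n := by omega
    set i : Fin n := ⟨k + 1, hk⟩
    set F : ℝ → ℝ := fun u => ∫ s in (0:ℝ)..u, Y k s with hF
    have hFd : ∀ x : ℝ, HasDerivAt F (Y k x) x := (Y_basic k).2
    set g : ℝ → ℝ := fun u => z u i * Real.exp (-(F u)) with hg
    have key : g t = g 0 := by
      apply constant_of_has_deriv_right_zero (a := 0) (b := t)
        (f := g) (fun s hs => ((hzc i s hs.1).mul
          ((Real.continuous_exp.continuousAt).comp
            ((hFd s).continuousAt.neg))).continuousWithinAt)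
        ?_ t (Set.right_mem_Icc.mpr ht)
      intro x hx
      have hexp : HasDerivAt (fun u : ℝ => Real.exp (-(F u)))
          (Real.exp (-(F x)) * (-(Y k x))) x := ((hFd x).neg).exp
      have hz := hcomp i x hx.1
      have htr : towerRHS n (z x) i = Y k x * z x i := by
        have : z x ⟨k, hk'⟩ = Y k x := ih hk' x hx.1
        simp [towerRHS, i, ← this]
      rw [htr] at hz
      have hprod := hz.mul hexp
      have : Y k x * z x i * Real.exp (-(F x))
          + z x i * (Real.exp (-(F x)) * (-(Y k x))) = 0 := by ring
      rw [this] at hprod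
      exact hprod.hasDerivWithinAt
    have hF0 : F 0 = 0 := intervalIntegral.integral_same
    have hg0 : g 0 = 1 := by simp [hg, h0 i, hF0]
    have heq : z t i * Real.exp (-(F t)) = 1 := by rw [← hg0]; exact key
    have hY : Y (k + 1) t = Real.exp (F t) := rfl
    rw [hY]
    have := congrArg (· * Real.exp (F t)) heq
    simpa [Real.exp_neg, mul_assoc, Real.exp_ne_zero] using this

end PIVPTower

/-- **Tower-of-exponentials growth of a PIVP.**
The PIVP `y₁' = y₁`, `y_{k+1}' = y_k y_{k+1}`, `y(0) = (1,…,1)` has a unique solution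
defined for all `t ≥ 0`; it satisfies `y₁(t) = e^t` and
`y_{k+1}(t) = exp (∫₀ᵗ y_k(s) ds)`, and its last component dominates a tower of `n`
exponentials: `y_n(t) ≥ E_n(t − n + 1)` for all `t ≥ n − 1`. -/
theorem pivp_tower_of_exponentials (n : ℕ) (hn : 1 ≤ n) :
    ∃ y : ℝ → Fin n → ℝ,
      (∀ i : Fin n, y 0 i = 1) ∧
      (∀ t : ℝ, 0 ≤ t → HasDerivAt y (towerRHS n (y t)) t) ∧
      (∀ z : ℝ → Fin n → ℝ, (∀ i : Fin n, z 0 i = 1) →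
        (∀ t : ℝ, 0 ≤ t → HasDerivAt z (towerRHS n (z t)) t) →
        ∀ t : ℝ, 0 ≤ t → z t = y t) ∧
      (∀ t : ℝ, 0 ≤ t → y t ⟨0, by omega⟩ = Real.exp t) ∧
      (∀ (j : ℕ) (hj : j + 1 < n), ∀ t : ℝ, 0 ≤ t →
        y t ⟨j + 1, hj⟩ = Real.exp (∫ s in (0:ℝ)..t, y s ⟨j, by omega⟩)) ∧
      (∀ t : ℝ, (n : ℝ) - 1 ≤ t →
        iterExp n (t - (n : ℝ) + 1) ≤ y t ⟨n - 1, by omega⟩) := by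
  classical
  refine ⟨fun t i => PIVPTower.Y i t, fun i => PIVPTower.Y_zero i, ?_, ?_, ?_, ?_, ?_⟩
  · intro t ht
    apply hasDerivAt_pi.mpr
    rintro ⟨iv, hi⟩
    cases iv with
    | zero =>
      simpa [towerRHS, PIVPTower.Y] using Real.hasDerivAt_exp t
    | succ k =>
      simpa [towerRHS] using PIVPTower.Y_hasDerivAt k t
  · intro z hz0 hzd t ht
    funext i
    obtain ⟨iv, hi⟩ := i
    exact PIVPTower.uniqueness z hz0 hzd iv hi t ht
  · intro t ht; rfl
  · intro j hj t ht; rfl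
  · intro t ht
    have hcast : ((n - 1 : ℕ) : ℝ) = (n : ℝ) - 1 := by
      rw [Nat.cast_sub hn]; norm_num
    have h := PIVPTower.Y_growth (n - 1) t (by rw [hcast]; exact ht)
    have e1 : n - 1 + 1 = n := by omega
    have e2 : t - ((n - 1 : ℕ) : ℝ) = t - n + 1 := by rw [hcast]; ring
    rw [e1, e2] at h
    exact h
end
end
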